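/- Let C > 0 and let P, Q ∈ ℝ^{d×d} be symmetric positive definite matrices whose smallest eigenvalues satisfy λ_min(P) ≥ C and λ_min(Q) ≥ C. Then ‖P⁻³ − Q⁻³‖ ≤ (3√d / C⁴) ‖P − Q‖, where ‖·‖ is the Frobenius norm and P⁻³ = (P⁻¹)³. -/

import Mathlib

open Matrix

/-- Frobenius norm `‖X‖ = (trace(Xᵀ X))^{1/2}`. -/
noncomputable def frobNorm {d : ℕ} (X : Matrix (Fin d) (Fin d) ℝ) : ℝ :=
  Real.sqrt (Matrix.trace (Xᵀ * X))

/-!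
With `X = P⁻¹` and `Y = Q⁻¹`, the difference `X ^ k - Y ^ k` telescopes into the sum of the
`X ^ (k - i) * (Q - P) * Y ^ (i + 1)`, `i < k`. Multiplying by a matrix changes the Frobenius norm
by at most the factor of its operator norm, and an eigenvalue bound `λ_min(P) ≥ C` gives
`‖P⁻¹‖_op ≤ C⁻¹`. Hence `‖P⁻ᵏ - Q⁻ᵏ‖ ≤ k / C ^ (k + 1) * ‖P - Q‖`; for `k = 3` this gives the
claim because `√d ≥ 1` once `d ≥ 1`, while for `d = 0` both sides vanish.
-/

open scoped Matrix.Norms.Frobenius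

theorem pow_sub_pow_eq_sum_mul_sub_mul {R : Type*} [Ring R] {a b x y : R}
    (hx : x * a = 1) (hy : b * y = 1) (n : ℕ) :
    x ^ n - y ^ n = ∑ k ∈ Finset.range n, x ^ (n - k) * (b - a) * y ^ (k + 1) := by
  have hterm : ∀ k ∈ Finset.range n, x ^ (n - k) * (b - a) * y ^ (k + 1)
      = x ^ (n - k) * y ^ k - x ^ (n - (k + 1)) * y ^ (k + 1) := by
    intro k hk
    obtain ⟨m, hm⟩ : ∃ m, n - k = m + 1 := ⟨n - k - 1, by have := Finset.mem_range.mp hk; omega⟩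
    rw [hm, show n - (k + 1) = m by omega]
    calc x ^ (m + 1) * (b - a) * y ^ (k + 1)
        = x ^ (m + 1) * (b * y) * y ^ k - x ^ m * (x * a) * y ^ (k + 1) := by
          rw [pow_succ x m, pow_succ' y k]; noncomm_ring
      _ = x ^ (m + 1) * y ^ k - x ^ m * y ^ (k + 1) := by rw [hx, hy, mul_one, mul_one]
  rw [Finset.sum_congr rfl hterm, Finset.sum_range_sub' (fun k => x ^ (n - k) * y ^ k)]
  simp

namespace Matrix

section Frobenius

variable {𝕜 m n : Type*} [RCLike 𝕜] [Fintype m] [DecidableEq m] [Fintype n]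

theorem frobenius_norm_mul_le_norm_toEuclideanCLM_mul (A : Matrix m m 𝕜) (B : Matrix m n 𝕜) :
    ‖A * B‖ ≤ ‖toEuclideanCLM (𝕜 := 𝕜) A‖ * ‖B‖ := by
  set T := toEuclideanCLM (𝕜 := 𝕜) A
  have hcol : ∀ j, WithLp.toLp 2 ((A * B)ᵀ j) = T (WithLp.toLp 2 (Bᵀ j)) := fun j => by
    rw [toEuclideanCLM_toLp]
    rfl
  -- The Frobenius norm of `Mᵀ` is the `ℓ²` norm of the family of columns of `M`.
  have hsq : ‖(A * B)ᵀ‖ ^ 2 ≤ (‖T‖ * ‖Bᵀ‖) ^ 2 := by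
    change ‖WithLp.toLp 2 fun j => WithLp.toLp 2 ((A * B)ᵀ j)‖ ^ 2
      ≤ (‖T‖ * ‖WithLp.toLp 2 fun j => WithLp.toLp 2 (Bᵀ j)‖) ^ 2
    rw [mul_pow, PiLp.norm_sq_eq_of_L2, PiLp.norm_sq_eq_of_L2, Finset.mul_sum]
    refine Finset.sum_le_sum fun j _ => ?_
    rw [WithLp.ofLp_toLp, WithLp.ofLp_toLp, hcol, ← mul_pow]
    exact pow_le_pow_left₀ (norm_nonneg _) (T.le_opNorm _) 2
  rw [← frobenius_norm_transpose, ← frobenius_norm_transpose B]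
  exact (pow_le_pow_iff_left₀ (norm_nonneg _) (by positivity) two_ne_zero).mp hsq

theorem frobenius_norm_mul_le_mul_norm_toEuclideanCLM (B : Matrix n m 𝕜) (A : Matrix m m 𝕜) :
    ‖B * A‖ ≤ ‖B‖ * ‖toEuclideanCLM (𝕜 := 𝕜) A‖ := by
  rw [← frobenius_norm_conjTranspose, conjTranspose_mul, mul_comm,
    ← frobenius_norm_conjTranspose B]
  calc ‖Aᴴ * Bᴴ‖ ≤ ‖toEuclideanCLM (𝕜 := 𝕜) Aᴴ‖ * ‖Bᴴ‖ :=
        frobenius_norm_mul_le_norm_toEuclideanCLM_mul _ _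
    _ = ‖toEuclideanCLM (𝕜 := 𝕜) A‖ * ‖Bᴴ‖ := by
        rw [← star_eq_conjTranspose, map_star, ContinuousLinearMap.star_eq_adjoint,
          ContinuousLinearMap.adjoint.norm_map]

theorem frobenius_norm_mul_mul_le [DecidableEq n] (A : Matrix m m 𝕜) (M : Matrix m n 𝕜)
    (B : Matrix n n 𝕜) :
    ‖A * M * B‖ ≤ ‖toEuclideanCLM (𝕜 := 𝕜) A‖ * ‖M‖ * ‖toEuclideanCLM (𝕜 := 𝕜) B‖ :=
  (frobenius_norm_mul_le_mul_norm_toEuclideanCLM _ B).trans <| by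
    gcongr
    exact frobenius_norm_mul_le_norm_toEuclideanCLM_mul A M

theorem frobenius_norm_inv_pow_sub_inv_pow_le {P Q : Matrix m m 𝕜} (hP : IsUnit P)
    (hQ : IsUnit Q) {c : ℝ} (hPc : ‖toEuclideanCLM (𝕜 := 𝕜) P⁻¹‖ ≤ c)
    (hQc : ‖toEuclideanCLM (𝕜 := 𝕜) Q⁻¹‖ ≤ c) (k : ℕ) :
    ‖P⁻¹ ^ k - Q⁻¹ ^ k‖ ≤ k * c ^ (k + 1) * ‖P - Q‖ := by
  have hc : 0 ≤ c := (norm_nonneg _).trans hPc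
  have hpow : ∀ {R : Matrix m m 𝕜}, ‖toEuclideanCLM (n := m) (𝕜 := 𝕜) R‖ ≤ c →
      ∀ j, 0 < j → ‖toEuclideanCLM (n := m) (𝕜 := 𝕜) (R ^ j)‖ ≤ c ^ j := fun hR j hj => by
    rw [map_pow]
    exact (norm_pow_le' _ hj).trans (pow_le_pow_left₀ (norm_nonneg _) hR j)
  have hterm : ∀ i ∈ Finset.range k,
      ‖P⁻¹ ^ (k - i) * (Q - P) * Q⁻¹ ^ (i + 1)‖ ≤ c ^ (k + 1) * ‖P - Q‖ := fun i hi => by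
    have hik := Finset.mem_range.mp hi
    calc _ ≤ c ^ (k - i) * ‖Q - P‖ * c ^ (i + 1) := by
          grw [frobenius_norm_mul_mul_le, hpow hPc _ (by omega), hpow hQc _ i.succ_pos]
      _ = c ^ (k + 1) * ‖P - Q‖ := by
          rw [norm_sub_rev, mul_right_comm, ← pow_add, show k - i + (i + 1) = k + 1 by omega]
  rw [pow_sub_pow_eq_sum_mul_sub_mul ((isUnit_iff_isUnit_det P).mp hP |> nonsing_inv_mul P)
    ((isUnit_iff_isUnit_det Q).mp hQ |> mul_nonsing_inv Q)]
  calc _ ≤ ∑ i ∈ Finset.range k, ‖P⁻¹ ^ (k - i) * (Q - P) * Q⁻¹ ^ (i + 1)‖ := norm_sum_le _ _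
    _ ≤ ∑ _i ∈ Finset.range k, c ^ (k + 1) * ‖P - Q‖ := Finset.sum_le_sum hterm
    _ = k * c ^ (k + 1) * ‖P - Q‖ := by
        rw [Finset.sum_const, Finset.card_range, nsmul_eq_mul, mul_assoc]

end Frobenius

section Eigenvalues

variable {n : Type*} [Fintype n] [DecidableEq n]

theorem IsHermitian.posSemidef_sub_smul_one {A : Matrix n n ℝ} (hA : A.IsHermitian) {c : ℝ}
    (h : ∀ i, c ≤ hA.eigenvalues i) : (A - c • 1).PosSemidef := by
  rw [posSemidef_iff_isHermitian_and_spectrum_nonneg, ← Algebra.algebraMap_eq_smul_one,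
    ← spectrum.sub_singleton_eq, hA.spectrum_real_eq_range_eigenvalues]
  refine ⟨hA.sub (isHermitian_iff_isSelfAdjoint.mpr (.algebraMap _ (.all c))), ?_⟩
  rintro _ ⟨_, ⟨i, rfl⟩, _, rfl, rfl⟩
  exact sub_nonneg.mpr (h i)

open scoped RealInnerProductSpace in
theorem PosSemidef.mul_norm_le_norm_toEuclideanCLM {A : Matrix n n ℝ} {c : ℝ}
    (hA : (A - c • 1).PosSemidef) (x : EuclideanSpace ℝ n) :
    c * ‖x‖ ≤ ‖toEuclideanCLM (𝕜 := ℝ) A x‖ := by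
  have hquad : c * ‖x‖ ^ 2 ≤ ⟪x, toEuclideanCLM (𝕜 := ℝ) A x⟫ := by
    have hA' := hA.dotProduct_mulVec_nonneg x.ofLp
    rw [sub_mulVec, smul_mulVec, one_mulVec, star_trivial, dotProduct_sub, dotProduct_smul,
      smul_eq_mul, sub_nonneg] at hA'
    have hxx : ⟪x, x⟫ = x.ofLp ⬝ᵥ x.ofLp := by simpa using inner_toEuclideanCLM 1 x x
    rwa [inner_toEuclideanCLM, ← real_inner_self_eq_norm_sq, hxx]
  rcases (norm_nonneg x).eq_or_lt with hx | hx
  · rw [← hx, mul_zero]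
    exact norm_nonneg _
  · refine le_of_mul_le_mul_right ?_ hx
    calc c * ‖x‖ * ‖x‖ = c * ‖x‖ ^ 2 := by ring
      _ ≤ ⟪x, toEuclideanCLM (𝕜 := ℝ) A x⟫ := hquad
      _ ≤ ‖x‖ * ‖toEuclideanCLM (𝕜 := ℝ) A x‖ := real_inner_le_norm _ _
      _ = _ := mul_comm _ _

theorem PosDef.norm_toEuclideanCLM_inv_le {P : Matrix n n ℝ} (hP : P.PosDef) {c : ℝ}
    (hc : 0 < c) (h : ∀ i, c ≤ hP.1.eigenvalues i) : ‖toEuclideanCLM (𝕜 := ℝ) P⁻¹‖ ≤ c⁻¹ := by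
  refine ContinuousLinearMap.opNorm_le_bound _ (inv_nonneg.mpr hc.le) fun v => ?_
  have hPP : toEuclideanCLM (𝕜 := ℝ) P * toEuclideanCLM (𝕜 := ℝ) P⁻¹ = 1 := by
    rw [← map_mul, mul_nonsing_inv _ ((isUnit_iff_isUnit_det P).mp hP.isUnit), map_one]
  have hPv : toEuclideanCLM (𝕜 := ℝ) P (toEuclideanCLM (𝕜 := ℝ) P⁻¹ v) = v :=
    DFunLike.congr_fun hPP v
  rw [inv_mul_eq_div, le_div_iff₀' hc]
  calc c * ‖toEuclideanCLM (𝕜 := ℝ) P⁻¹ v‖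
      ≤ ‖toEuclideanCLM (𝕜 := ℝ) P (toEuclideanCLM (𝕜 := ℝ) P⁻¹ v)‖ :=
        (hP.1.posSemidef_sub_smul_one h).mul_norm_le_norm_toEuclideanCLM _
    _ = ‖v‖ := by rw [hPv]

end Eigenvalues

end Matrix

theorem frobNorm_eq_norm {d : ℕ} (X : Matrix (Fin d) (Fin d) ℝ) : frobNorm X = ‖X‖ := by
  rw [frobNorm, frobenius_norm_def, Real.sqrt_eq_rpow, trace, Finset.sum_comm]
  simp [mul_apply, sq]

/-- if `P`, `Q` are symmetric positive definite with all eigenvalues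
(in particular the smallest ones) at least `C > 0`, then
`‖P⁻³ − Q⁻³‖ ≤ (3√d / C⁴) ‖P − Q‖` in the Frobenius norm, where `P⁻³ = (P⁻¹)³`. -/
theorem inverse_cube_lipschitz_bound (d : ℕ) (C : ℝ) (hC : 0 < C)
    (P Q : Matrix (Fin d) (Fin d) ℝ) (hP : P.PosDef) (hQ : Q.PosDef)
    (hPev : ∀ i : Fin d, C ≤ hP.1.eigenvalues i)
    (hQev : ∀ i : Fin d, C ≤ hQ.1.eigenvalues i) :
    frobNorm ((P⁻¹) ^ 3 - (Q⁻¹) ^ 3) ≤ 3 * Real.sqrt d / C ^ 4 * frobNorm (P - Q) := by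
  obtain rfl | hd := Nat.eq_zero_or_pos d
  · simp [frobNorm, trace]
  have hsqrt : 1 ≤ Real.sqrt d := Real.one_le_sqrt.mpr (by exact_mod_cast hd)
  have hcube := frobenius_norm_inv_pow_sub_inv_pow_le hP.isUnit hQ.isUnit
    (hP.norm_toEuclideanCLM_inv_le hC hPev) (hQ.norm_toEuclideanCLM_inv_le hC hQev) 3
  rw [frobNorm_eq_norm, frobNorm_eq_norm]
  calc _ ≤ 3 * C⁻¹ ^ (3 + 1) * ‖P - Q‖ := by exact_mod_cast hcube
    _ ≤ 3 * Real.sqrt d / C ^ 4 * ‖P - Q‖ := by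
        rw [inv_pow, ← div_eq_mul_inv]
        gcongr
        linarith
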